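/- arXiv:2206.04001 — 6 statements merged into one kernel-verified Lean document; each statement's English description precedes it below -/
import Mathlib

section
/- Let 0 < p < q < ∞ and let φ : [0,∞) → [0,1] be measurable with 0 < ∫₀^∞ r^{q-1} φ(r) dr < ∞. Then (p ∫₀^∞ r^{p-1} φ(r) dr)^{1/p} ≤ (q ∫₀^∞ r^{q-1} φ(r) dr)^{1/q}. -/
open MeasureTheory Set

theorem stmt_0 (p q : ℝ) (hp : 0 < p) (hpq : p < q)
    (φ : ℝ → ℝ) (hφ : Measurable φ)
    (hφ01 : ∀ r, 0 ≤ r → 0 ≤ φ r ∧ φ r ≤ 1)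
    (hint : IntegrableOn (fun r => r ^ (q - 1) * φ r) (Ioi 0))
    (hpos : 0 < ∫ r in Ioi (0 : ℝ), r ^ (q - 1) * φ r) :
    (p * ∫ r in Ioi (0 : ℝ), r ^ (p - 1) * φ r) ^ (1 / p)
      ≤ (q * ∫ r in Ioi (0 : ℝ), r ^ (q - 1) * φ r) ^ (1 / q) := by
  have hq : 0 < q := hp.trans hpq
  set Iq := ∫ r in Ioi (0:ℝ), r ^ (q-1) * φ r with hIq
  have hqIq : 0 < q * Iq := mul_pos hq hpos
  set R : ℝ := (q * Iq) ^ (1/q) with hRdef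
  have hR0 : 0 < R := Real.rpow_pos_of_pos hqIq _
  have hRq : R ^ q = q * Iq := by
    rw [hRdef, ← Real.rpow_mul hqIq.le, one_div_mul_cancel hq.ne', Real.rpow_one]
  have meas : ∀ s : ℝ, Measurable fun r : ℝ => r ^ s * φ r := fun s =>
    (measurable_id.pow measurable_const).mul hφ
  -- integrability of pure powers on Ioc 0 R
  have int_rpow : ∀ s : ℝ, -1 < s → IntegrableOn (fun r : ℝ => r ^ s) (Ioc 0 R) := by
    intro s hs
    have := intervalIntegral.intervalIntegrable_rpow' (a := 0) (b := R) hs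
    rw [intervalIntegrable_iff, uIoc_of_le hR0.le] at this
    exact this
  -- values of power integrals
  have hval : ∀ s : ℝ, 0 < s → (∫ r in Ioc (0:ℝ) R, r ^ (s-1)) = R ^ s / s := by
    intro s hs
    have h := integral_rpow (a := 0) (b := R) (r := s - 1)
      (Or.inl (by linarith : (-1:ℝ) < s - 1))
    rw [intervalIntegral.integral_of_le hR0.le] at h
    rw [h]
    rw [sub_add_cancel, Real.zero_rpow hs.ne', sub_zero]
  -- integrability of weighted powers on Ioc 0 R
  have intφ : ∀ s : ℝ, -1 < s → IntegrableOn (fun r => r ^ s * φ r) (Ioc 0 R) := by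
    intro s hs
    refine (int_rpow s hs).mono' ((meas s).aestronglyMeasurable) ?_
    filter_upwards [ae_restrict_mem measurableSet_Ioc] with r hr
    have h01 := hφ01 r hr.1.le
    have hrs : (0:ℝ) ≤ r ^ s := Real.rpow_nonneg hr.1.le s
    rw [Real.norm_eq_abs, abs_mul, abs_of_nonneg hrs, abs_of_nonneg h01.1]
    exact mul_le_of_le_one_right hrs h01.2
  have intq_Ioc := intφ (q-1) (by linarith)
  have intp_Ioc := intφ (p-1) (by linarith)
  have hintq_Ioi : IntegrableOn (fun r => r ^ (q-1) * φ r) (Ioi R) :=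
    hint.mono_set (Ioi_subset_Ioi hR0.le)
  -- pointwise bound on Ioi R
  have hbd : ∀ r ∈ Ioi R, r ^ (p-1) * φ r ≤ R ^ (p-q) * (r ^ (q-1) * φ r) := by
    intro r hr
    have hrR : R < r := hr
    have hr0 : 0 < r := hR0.trans hrR
    have h01 := hφ01 r hr0.le
    have h1 : r ^ (p-1) = r ^ (p-q) * r ^ (q-1) := by
      rw [← Real.rpow_add hr0]; ring_nf
    have h2 : r ^ (p-q) ≤ R ^ (p-q) :=
      Real.rpow_le_rpow_of_nonpos hR0 hrR.le (by linarith)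
    calc r ^ (p-1) * φ r = r ^ (p-q) * (r ^ (q-1) * φ r) := by rw [h1]; ring
      _ ≤ R ^ (p-q) * (r ^ (q-1) * φ r) := by
          apply mul_le_mul_of_nonneg_right h2
          exact mul_nonneg (Real.rpow_nonneg hr0.le _) h01.1
  have hintp_Ioi : IntegrableOn (fun r => r ^ (p-1) * φ r) (Ioi R) := by
    refine (hintq_Ioi.const_mul (R ^ (p-q))).mono' ((meas (p-1)).aestronglyMeasurable) ?_
    filter_upwards [ae_restrict_mem measurableSet_Ioi] with r hr
    have hr0 : 0 < r := hR0.trans hr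
    have h01 := hφ01 r hr0.le
    rw [Real.norm_eq_abs, abs_mul, abs_of_nonneg (Real.rpow_nonneg hr0.le _),
      abs_of_nonneg h01.1]
    exact hbd r hr
  -- splitting lemma
  have hsplit : ∀ f : ℝ → ℝ, IntegrableOn f (Ioc 0 R) → IntegrableOn f (Ioi R) →
      (∫ r in Ioi (0:ℝ), f r) = (∫ r in Ioc (0:ℝ) R, f r) + ∫ r in Ioi R, f r := by
    intro f h1 h2
    rw [← Ioc_union_Ioi_eq_Ioi hR0.le,
      setIntegral_union Ioc_disjoint_Ioi_same measurableSet_Ioi h1 h2]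
  -- key identity from definition of R
  have hqsplit : Iq = (∫ r in Ioc (0:ℝ) R, r ^ (q-1) * φ r) + ∫ r in Ioi R, r ^ (q-1) * φ r :=
    hsplit _ intq_Ioc hintq_Ioi
  have hkey : (∫ r in Ioi R, r ^ (q-1) * φ r)
      = ∫ r in Ioc (0:ℝ) R, (r ^ (q-1) - r ^ (q-1) * φ r) := by
    rw [integral_sub (int_rpow (q-1) (by linarith)) intq_Ioc, hval q hq]
    have : R ^ q / q = Iq := by rw [hRq]; field_simp
    rw [this, hqsplit]; ring
  -- second pointwise bound on Ioc 0 R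
  have hbd2 : ∀ r ∈ Ioc (0:ℝ) R, R ^ (p-q) * (r ^ (q-1) - r ^ (q-1) * φ r)
      ≤ r ^ (p-1) - r ^ (p-1) * φ r := by
    intro r hr
    have hr0 : 0 < r := hr.1
    have h01 := hφ01 r hr0.le
    have h1 : r ^ (p-1) = r ^ (p-q) * r ^ (q-1) := by
      rw [← Real.rpow_add hr0]; ring_nf
    have h2 : R ^ (p-q) ≤ r ^ (p-q) :=
      Real.rpow_le_rpow_of_nonpos hr0 hr.2 (by linarith)
    have h3 : (0:ℝ) ≤ r ^ (q-1) * (1 - φ r) :=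
      mul_nonneg (Real.rpow_nonneg hr0.le _) (by linarith [h01.2])
    calc R ^ (p-q) * (r ^ (q-1) - r ^ (q-1) * φ r)
        = R ^ (p-q) * (r ^ (q-1) * (1 - φ r)) := by ring
      _ ≤ r ^ (p-q) * (r ^ (q-1) * (1 - φ r)) := mul_le_mul_of_nonneg_right h2 h3
      _ = r ^ (p-1) - r ^ (p-1) * φ r := by rw [h1]; ring
  -- now the main estimate
  have intq1 : IntegrableOn (fun r : ℝ => r ^ (q-1) - r ^ (q-1) * φ r) (Ioc 0 R) :=
    (int_rpow (q-1) (by linarith)).sub intq_Ioc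
  have intp1 : IntegrableOn (fun r : ℝ => r ^ (p-1) - r ^ (p-1) * φ r) (Ioc 0 R) :=
    (int_rpow (p-1) (by linarith)).sub intp_Ioc
  have step1 : (∫ r in Ioi R, r ^ (p-1) * φ r)
      ≤ R ^ (p-q) * ∫ r in Ioi R, r ^ (q-1) * φ r := by
    rw [← integral_const_mul]
    exact setIntegral_mono_on hintp_Ioi (hintq_Ioi.const_mul _) measurableSet_Ioi hbd
  have step2 : R ^ (p-q) * (∫ r in Ioi R, r ^ (q-1) * φ r)
      ≤ ∫ r in Ioc (0:ℝ) R, (r ^ (p-1) - r ^ (p-1) * φ r) := by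
    rw [hkey, ← integral_const_mul]
    exact setIntegral_mono_on (intq1.const_mul _) intp1 measurableSet_Ioc hbd2
  have main : (∫ r in Ioi (0:ℝ), r ^ (p-1) * φ r) ≤ R ^ p / p := by
    rw [hsplit _ intp_Ioc hintp_Ioi]
    have : (∫ r in Ioc (0:ℝ) R, r ^ (p-1) * φ r)
        + ∫ r in Ioc (0:ℝ) R, (r ^ (p-1) - r ^ (p-1) * φ r) = R ^ p / p := by
      rw [← integral_add intp_Ioc intp1]
      have : (∫ r in Ioc (0:ℝ) R, (r ^ (p-1) * φ r + (r ^ (p-1) - r ^ (p-1) * φ r)))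
          = ∫ r in Ioc (0:ℝ) R, r ^ (p-1) := by
        apply setIntegral_congr_fun measurableSet_Ioc
        intro r _; ring
      rw [this, hval p hp]
    linarith [step1.trans step2]
  -- nonnegativity of the p-integral
  have hnn : (0:ℝ) ≤ ∫ r in Ioi (0:ℝ), r ^ (p-1) * φ r := by
    apply setIntegral_nonneg measurableSet_Ioi
    intro r hr
    exact mul_nonneg (Real.rpow_nonneg (le_of_lt hr) _) (hφ01 r (le_of_lt hr)).1
  -- finish
  have hfin : p * (∫ r in Ioi (0:ℝ), r ^ (p-1) * φ r) ≤ R ^ p := by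
    have := mul_le_mul_of_nonneg_left main hp.le
    rw [mul_div_cancel₀ _ hp.ne'] at this
    linarith
  calc (p * ∫ r in Ioi (0:ℝ), r ^ (p-1) * φ r) ^ (1/p)
      ≤ (R ^ p) ^ (1/p) :=
        Real.rpow_le_rpow (mul_nonneg hp.le hnn) hfin (by positivity)
    _ = R := by
        rw [← Real.rpow_mul hR0.le, mul_one_div_cancel hp.ne', Real.rpow_one]
    _ = (q * Iq) ^ (1/q) := rfl
end

section
/- Let 0 < p < q < ∞ and let φ : [0,∞) → [0,1] be measurable with 0 < ∫₀^∞ r^{q-1} φ(r) dr < ∞. If (p ∫₀^∞ r^{p-1} φ(r) dr)^{1/p} = (q ∫₀^∞ r^{q-1} φ(r) dr)^{1/q}, then there is a constant 0 < R < ∞ such that φ = 1_{[0,R]} almost everywhere on [0,∞). -/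
open MeasureTheory Set

lemma ind_int_aux (s R : ℝ) (hs : 0 < s) (hR : 0 < R) :
    IntegrableOn (fun r => r ^ (s - 1) * Set.indicator (Icc 0 R) 1 r) (Ioi (0:ℝ)) ∧
    ∫ r in Ioi (0:ℝ), r ^ (s - 1) * Set.indicator (Icc 0 R) 1 r = R ^ s / s := by
  have hbase : IntegrableOn (fun r : ℝ => r ^ (s - 1)) (Ioc (0:ℝ) R) :=
    (intervalIntegral.intervalIntegrable_rpow' (by linarith)).1
  have heqf : Set.EqOn (fun r => r ^ (s - 1) * Set.indicator (Icc 0 R) 1 r)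
      (Set.indicator (Ioc (0:ℝ) R) (fun r => r ^ (s - 1))) (Ioi (0:ℝ)) := by
    intro r hr
    show r ^ (s - 1) * Set.indicator (Icc 0 R) 1 r
      = Set.indicator (Ioc (0:ℝ) R) (fun r => r ^ (s - 1)) r
    by_cases h : r ≤ R
    · rw [Set.indicator_of_mem (show r ∈ Icc (0:ℝ) R from ⟨le_of_lt hr, h⟩),
        Set.indicator_of_mem (show r ∈ Ioc (0:ℝ) R from ⟨hr, h⟩), Pi.one_apply, mul_one]
    · rw [Set.indicator_of_notMem (show r ∉ Icc (0:ℝ) R from fun hm => h hm.2),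
        Set.indicator_of_notMem (show r ∉ Ioc (0:ℝ) R from fun hm => h hm.2), mul_zero]
  have hindint : Integrable (Set.indicator (Ioc (0:ℝ) R) fun r => r ^ (s - 1)) :=
    hbase.integrable_indicator measurableSet_Ioc
  constructor
  · exact (hindint.integrableOn).congr_fun (fun r hr => (heqf hr).symm) measurableSet_Ioi
  · rw [setIntegral_congr_fun measurableSet_Ioi heqf,
      setIntegral_indicator measurableSet_Ioc,
      Set.inter_eq_self_of_subset_right Ioc_subset_Ioi_self,
      ← intervalIntegral.integral_of_le hR.le, integral_rpow (Or.inl (by linarith)),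
      show s - 1 + 1 = s by ring, Real.zero_rpow hs.ne', sub_zero]

theorem stmt_1 (p q : ℝ) (hp : 0 < p) (hpq : p < q)
    (φ : ℝ → ℝ) (hφ : Measurable φ)
    (hφ01 : ∀ r, 0 ≤ r → 0 ≤ φ r ∧ φ r ≤ 1)
    (hint : IntegrableOn (fun r => r ^ (q - 1) * φ r) (Ioi 0))
    (hpos : 0 < ∫ r in Ioi (0 : ℝ), r ^ (q - 1) * φ r)
    (heq : (p * ∫ r in Ioi (0 : ℝ), r ^ (p - 1) * φ r) ^ (1 / p)
      = (q * ∫ r in Ioi (0 : ℝ), r ^ (q - 1) * φ r) ^ (1 / q)) :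
    ∃ R : ℝ, 0 < R ∧
      ∀ᵐ r ∂(volume.restrict (Ici (0 : ℝ))), φ r = Set.indicator (Icc 0 R) 1 r := by
  have hq : 0 < q := hp.trans hpq
  -- measurability
  have hmeasP : Measurable fun r : ℝ => r ^ (p - 1) * φ r :=
    (measurable_id.pow_const _).mul hφ
  -- integrability of r^(p-1) * φ on Ioi 0
  have hintp : IntegrableOn (fun r => r ^ (p - 1) * φ r) (Ioi (0:ℝ)) := by
    have h1 : IntegrableOn (fun r => r ^ (p - 1) * φ r) (Ioc (0:ℝ) 1) := by
      have hbase : IntegrableOn (fun r : ℝ => r ^ (p - 1)) (Ioc (0:ℝ) 1) :=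
        (intervalIntegral.intervalIntegrable_rpow' (by linarith)).1
      refine MeasureTheory.Integrable.mono hbase hmeasP.aestronglyMeasurable.restrict ?_
      filter_upwards [ae_restrict_mem measurableSet_Ioc] with r hr
      obtain ⟨h0, h1'⟩ := hφ01 r hr.1.le
      have hrp : (0:ℝ) ≤ r ^ (p - 1) := Real.rpow_nonneg hr.1.le _
      rw [Real.norm_eq_abs, Real.norm_eq_abs, abs_of_nonneg (mul_nonneg hrp h0),
        abs_of_nonneg hrp]
      nlinarith
    have h2 : IntegrableOn (fun r => r ^ (p - 1) * φ r) (Ioi (1:ℝ)) := by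
      refine MeasureTheory.Integrable.mono (hint.mono_set (Ioi_subset_Ioi zero_le_one))
        hmeasP.aestronglyMeasurable.restrict ?_
      filter_upwards [ae_restrict_mem measurableSet_Ioi] with r hr
      have hr0 : (0:ℝ) < r := lt_trans zero_lt_one hr
      obtain ⟨h0, h1'⟩ := hφ01 r hr0.le
      have hrp : (0:ℝ) ≤ r ^ (p - 1) := Real.rpow_nonneg hr0.le _
      have hrq : (0:ℝ) ≤ r ^ (q - 1) := Real.rpow_nonneg hr0.le _
      rw [Real.norm_eq_abs, Real.norm_eq_abs, abs_of_nonneg (mul_nonneg hrp h0),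
        abs_of_nonneg (mul_nonneg hrq h0)]
      exact mul_le_mul_of_nonneg_right
        (Real.rpow_le_rpow_of_exponent_le hr.le (by linarith)) h0
    rw [← Ioc_union_Ioi_eq_Ioi (zero_le_one)]
    exact h1.union h2
  have hIpnn : 0 ≤ ∫ r in Ioi (0:ℝ), r ^ (p - 1) * φ r :=
    setIntegral_nonneg measurableSet_Ioi fun r hr =>
      mul_nonneg (Real.rpow_nonneg (le_of_lt hr) _) (hφ01 r (le_of_lt hr)).1
  set R : ℝ := (q * ∫ r in Ioi (0 : ℝ), r ^ (q - 1) * φ r) ^ (1 / q) with hRdef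
  have hqI : 0 < q * ∫ r in Ioi (0 : ℝ), r ^ (q - 1) * φ r := by positivity
  have hRpos : 0 < R := Real.rpow_pos_of_pos hqI _
  have hRq : R ^ q = q * ∫ r in Ioi (0 : ℝ), r ^ (q - 1) * φ r := by
    rw [hRdef, ← Real.rpow_mul hqI.le, one_div, inv_mul_cancel₀ hq.ne', Real.rpow_one]
  have hRp : R ^ p = p * ∫ r in Ioi (0 : ℝ), r ^ (p - 1) * φ r := by
    rw [← heq, ← Real.rpow_mul (mul_nonneg hp.le hIpnn), one_div,
      inv_mul_cancel₀ hp.ne', Real.rpow_one]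
  obtain ⟨hintq', hJq⟩ := ind_int_aux q R hq hRpos
  obtain ⟨hintp', hJp⟩ := ind_int_aux p R hp hRpos
  have hz1 : ∫ r in Ioi (0:ℝ),
      (r ^ (q - 1) * φ r - r ^ (q - 1) * Set.indicator (Icc 0 R) 1 r) = 0 := by
    rw [integral_sub hint hintq', hJq, hRq]
    field_simp
    ring
  have hz2 : ∫ r in Ioi (0:ℝ),
      (r ^ (p - 1) * φ r - r ^ (p - 1) * Set.indicator (Icc 0 R) 1 r) = 0 := by
    rw [integral_sub hintp hintp', hJp, hRp]
    field_simp
    ring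
  have hsub1 : IntegrableOn (fun r => r ^ (q - 1) * φ r
      - r ^ (q - 1) * Set.indicator (Icc 0 R) 1 r) (Ioi (0:ℝ)) := hint.sub hintq'
  have hsub2 : IntegrableOn (fun r => r ^ (p - 1) * φ r
      - r ^ (p - 1) * Set.indicator (Icc 0 R) 1 r) (Ioi (0:ℝ)) := hintp.sub hintp'
  set g : ℝ → ℝ := fun r => R ^ (p - q)
      * (r ^ (q - 1) * φ r - r ^ (q - 1) * Set.indicator (Icc 0 R) 1 r)
      - (r ^ (p - 1) * φ r - r ^ (p - 1) * Set.indicator (Icc 0 R) 1 r) with hgdef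
  have hintg : IntegrableOn g (Ioi (0:ℝ)) := (hsub1.const_mul _).sub hsub2
  have hzero : ∫ r in Ioi (0:ℝ), g r = 0 := by
    rw [hgdef]
    rw [integral_sub (hsub1.const_mul _) hsub2, integral_const_mul _ _, hz1, hz2]
    ring
  have hkey : ∀ r : ℝ, g r = (R ^ (p - q) * r ^ (q - 1) - r ^ (p - 1))
      * (φ r - Set.indicator (Icc 0 R) 1 r) := by
    intro r; rw [hgdef]; ring
  have hnn : 0 ≤ᵐ[volume.restrict (Ioi (0:ℝ))] g := by
    filter_upwards [ae_restrict_mem measurableSet_Ioi] with r hr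
    simp only [Pi.zero_apply]
    rw [hkey r]
    have hr0 : (0:ℝ) < r := hr
    obtain ⟨h0, h1'⟩ := hφ01 r hr0.le
    have hrpq : r ^ (p - 1) = r ^ (q - 1) * r ^ (p - q) := by
      rw [← Real.rpow_add hr0]; congr 1; ring
    have hrq : (0:ℝ) ≤ r ^ (q - 1) := Real.rpow_nonneg hr0.le _
    by_cases hle : r ≤ R
    · have hind1 : Set.indicator (Icc 0 R) (1 : ℝ → ℝ) r = 1 :=
        Set.indicator_of_mem (show r ∈ Icc (0:ℝ) R from ⟨hr0.le, hle⟩) _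
      have hcmp : R ^ (p - q) ≤ r ^ (p - q) :=
        Real.rpow_le_rpow_of_nonpos hr0 hle (by linarith)
      rw [hind1]
      have hfac : R ^ (p - q) * r ^ (q - 1) - r ^ (p - 1) ≤ 0 := by
        rw [hrpq]; nlinarith
      nlinarith
    · have hind0 : Set.indicator (Icc 0 R) (1 : ℝ → ℝ) r = 0 :=
        Set.indicator_of_notMem (show r ∉ Icc (0:ℝ) R from fun hm => hle hm.2) _
      have hcmp : r ^ (p - q) ≤ R ^ (p - q) :=
        Real.rpow_le_rpow_of_nonpos hRpos (le_of_not_ge hle) (by linarith)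
      rw [hind0]
      have hfac : 0 ≤ R ^ (p - q) * r ^ (q - 1) - r ^ (p - 1) := by
        rw [hrpq]; nlinarith
      nlinarith
  have hae : g =ᵐ[volume.restrict (Ioi (0:ℝ))] 0 :=
    (integral_eq_zero_iff_of_nonneg_ae hnn hintg).1 hzero
  have hne : ∀ᵐ r ∂(volume.restrict (Ioi (0:ℝ))), r ≠ R := by
    refine ae_iff.2 ?_
    have hset : {a : ℝ | ¬ a ≠ R} = {R} := by ext x; simp
    rw [hset, Measure.restrict_apply (measurableSet_singleton R)]
    exact measure_mono_null Set.inter_subset_left (measure_singleton R)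
  refine ⟨R, hRpos, ?_⟩
  rw [← Measure.restrict_congr_set (Ioi_ae_eq_Ici (a := (0:ℝ)))]
  filter_upwards [hae, hne, ae_restrict_mem measurableSet_Ioi] with r h0 hrne hr
  have hr0 : (0:ℝ) < r := hr
  have hzg : (R ^ (p - q) * r ^ (q - 1) - r ^ (p - 1))
      * (φ r - Set.indicator (Icc 0 R) 1 r) = 0 := by
    rw [← hkey r]; simpa using h0
  have hfacne : R ^ (p - q) * r ^ (q - 1) - r ^ (p - 1) ≠ 0 := by
    intro hcon
    apply hrne
    have hrpq : r ^ (p - 1) = r ^ (q - 1) * r ^ (p - q) := by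
      rw [← Real.rpow_add hr0]; congr 1; ring
    have hq1 : (0:ℝ) < r ^ (q - 1) := Real.rpow_pos_of_pos hr0 _
    have h2 : r ^ (p - q) = R ^ (p - q) := by
      rw [hrpq] at hcon
      have : r ^ (q - 1) * (R ^ (p - q) - r ^ (p - q)) = 0 := by linarith
      rcases mul_eq_zero.1 this with h | h
      · exact absurd h hq1.ne'
      · linarith
    exact Real.rpow_left_injOn (by intro hc; apply absurd hc; intro hc'; linarith : p - q ≠ 0)
      (Set.mem_setOf.2 hr0.le) (Set.mem_setOf.2 hRpos.le) h2
  have := (mul_eq_zero.1 hzg).resolve_left hfacne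
  linarith
end

section
/- Let n ≥ 2 and let f ∈ L¹(ℝⁿ) satisfy 0 ≤ f ≤ 1 on ℝⁿ, ∫ f(v)(1+|v|²) dv < ∞, and ∫ f dv > 0. Set M₀ = ∫ f(v) dv, v₀ = (1/M₀) ∫ f(v) v dv, M₂ = ∫ f(v)|v−v₀|² dv. Then M₂ / M₀^{(n+2)/n} ≥ (n/(n+2)) (n/|𝕊^{n-1}|)^{2/n}, where |𝕊^{n-1}| is the surface area of the unit sphere in ℝⁿ. -/
open MeasureTheory Set Metric

/-- The surface area of the unit sphere `𝕊^{n-1} ⊂ ℝⁿ`, equal to `n` times the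
volume of the unit ball, i.e. `2 π^(n/2) / Γ(n/2)`. -/
noncomputable def sphereArea (n : ℕ) : ℝ :=
  n * (volume (ball (0 : EuclideanSpace ℝ (Fin n)) 1)).toReal

private lemma key_alg (x a b w : ℝ) (hx : 0 < x) (ha : 0 < a) (hb : 0 < b) (hw : 0 < w) :
    x / (x + 2) * a⁻¹ = x * w * (b / (x + 2)) / (w * a * b) := by
  field_simp

theorem stmt_2 (n : ℕ) (hn : 2 ≤ n)
    (f : EuclideanSpace ℝ (Fin n) → ℝ) (hf : Measurable f)
    (hf01 : ∀ v, 0 ≤ f v ∧ f v ≤ 1)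
    (hint : Integrable (fun v => f v * (1 + ‖v‖ ^ 2)))
    (M₀ : ℝ) (hM₀ : M₀ = ∫ v, f v) (hM₀pos : 0 < M₀)
    (v₀ : EuclideanSpace ℝ (Fin n)) (hv₀ : v₀ = M₀⁻¹ • ∫ v, f v • v)
    (M₂ : ℝ) (hM₂ : M₂ = ∫ v, f v * ‖v - v₀‖ ^ 2) :
    M₂ / M₀ ^ (((n : ℝ) + 2) / n)
      ≥ ((n : ℝ) / (n + 2)) * ((n : ℝ) / sphereArea n) ^ (2 / (n : ℝ)) := by
  classical
  haveI : NeZero n := ⟨by omega⟩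
  haveI : Nontrivial (EuclideanSpace ℝ (Fin n)) := by
    have h0 : (EuclideanSpace.single (⟨0, by omega⟩ : Fin n) (1:ℝ)) ≠ 0 := by
      intro h
      have := congrArg (fun x => x (⟨0, by omega⟩ : Fin n)) h
      simp [EuclideanSpace.single_apply] at this
    exact nontrivial_of_ne _ 0 h0
  have hn0 : (0:ℝ) < n := by positivity
  set ω : ℝ := (volume (ball (0 : EuclideanSpace ℝ (Fin n)) 1)).toReal with hω
  have hωpos : 0 < ω := by
    refine ENNReal.toReal_pos (ne_of_gt (measure_ball_pos _ _ one_pos)) ?_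
    exact (measure_ball_lt_top).ne
  set R : ℝ := (M₀ / ω) ^ ((n : ℝ))⁻¹ with hRdef
  have hRpos : 0 < R := Real.rpow_pos_of_pos (by positivity) _
  have hRn : R ^ n = M₀ / ω := by
    rw [hRdef, ← Real.rpow_natCast ((M₀ / ω) ^ ((n:ℝ))⁻¹) n, ← Real.rpow_mul (by positivity),
      inv_mul_cancel₀ (ne_of_gt hn0), Real.rpow_one]
  clear_value ω R
  have hvol : (volume (ball v₀ R)).toReal = M₀ := by
    rw [Measure.addHaar_ball_of_pos volume v₀ hRpos, ENNReal.toReal_mul,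
      ENNReal.toReal_ofReal (by positivity), finrank_euclideanSpace_fin, hRn, ← hω]
    field_simp
  -- integrability facts
  have hfint : Integrable f := by
    refine hint.mono hf.aestronglyMeasurable ?_
    filter_upwards with v
    have h1 := (hf01 v).1
    have h2 : (0:ℝ) ≤ ‖v‖^2 := sq_nonneg _
    rw [Real.norm_eq_abs, Real.norm_eq_abs, abs_of_nonneg h1, abs_of_nonneg (by positivity)]
    nlinarith
  have hfq : Integrable (fun v => f v * ‖v - v₀‖ ^ 2) := by
    refine (hint.const_mul (2 + 2 * ‖v₀‖^2)).mono
      ((hf.mul ((measurable_id.sub_const v₀).norm.pow_const 2)).aestronglyMeasurable) ?_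
    filter_upwards with v
    have h1 := (hf01 v).1
    have h2 := (hf01 v).2
    have h3 : ‖v - v₀‖ ≤ ‖v‖ + ‖v₀‖ := norm_sub_le _ _
    have h4 : (0:ℝ) ≤ ‖v‖ := norm_nonneg _
    have h5 : (0:ℝ) ≤ ‖v₀‖ := norm_nonneg _
    rw [Real.norm_eq_abs, Real.norm_eq_abs, abs_of_nonneg (by positivity),
      abs_of_nonneg (by positivity)]
    have h6 : ‖v - v₀‖ ^ 2 ≤ (2 + 2 * ‖v₀‖ ^ 2) * (1 + ‖v‖ ^ 2) := by
      nlinarith [sq_nonneg (‖v‖ - ‖v₀‖), mul_nonneg h4 h5,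
        mul_self_le_mul_self (norm_nonneg (v - v₀)) h3,
        mul_nonneg (mul_nonneg h5 h5) (mul_nonneg h4 h4)]
    calc f v * ‖v - v₀‖ ^ 2 ≤ f v * ((2 + 2 * ‖v₀‖ ^ 2) * (1 + ‖v‖ ^ 2)) :=
          mul_le_mul_of_nonneg_left h6 h1
      _ = (2 + 2 * ‖v₀‖ ^ 2) * (f v * (1 + ‖v‖ ^ 2)) := by ring
  have hBmeas : MeasurableSet (ball v₀ R) := measurableSet_ball
  have hqcont : Continuous (fun v : EuclideanSpace ℝ (Fin n) => ‖v - v₀‖ ^ 2) :=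
    ((continuous_id.sub continuous_const).norm.pow 2)
  have hgq : IntegrableOn (fun v : EuclideanSpace ℝ (Fin n) => ‖v - v₀‖ ^ 2) (ball v₀ R) :=
    (hqcont.continuousOn.integrableOn_compact (isCompact_closedBall v₀ R)).mono_set
      ball_subset_closedBall
  have hg1 : IntegrableOn (fun _ : EuclideanSpace ℝ (Fin n) => (1:ℝ)) (ball v₀ R) :=
    integrableOn_const (measure_ball_lt_top).ne
  have hind_q : Integrable ((ball v₀ R).indicator
      (fun v : EuclideanSpace ℝ (Fin n) => ‖v - v₀‖ ^ 2)) :=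
    hgq.integrable_indicator hBmeas
  have hind_1 : Integrable ((ball v₀ R).indicator (fun _ : EuclideanSpace ℝ (Fin n) => (1:ℝ))) :=
    hg1.integrable_indicator hBmeas
  have hind_int : ∫ v, (ball v₀ R).indicator (fun _ : EuclideanSpace ℝ (Fin n) => (1:ℝ)) v = M₀ := by
    rw [integral_indicator hBmeas, setIntegral_const, smul_eq_mul, mul_one, measureReal_def, hvol]
  -- bathtub principle
  set IB : ℝ := ∫ v in ball v₀ R, ‖v - v₀‖ ^ 2 with hIB
  have hIBle : IB ≤ M₂ := by
    have hnn : ∀ v : EuclideanSpace ℝ (Fin n),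
        0 ≤ (f v - (ball v₀ R).indicator (fun _ => (1:ℝ)) v) * (‖v - v₀‖ ^ 2 - R ^ 2) := by
      intro v
      by_cases hv : v ∈ ball v₀ R
      · rw [indicator_of_mem hv]
        have h1 : ‖v - v₀‖ < R := by rwa [mem_ball, dist_eq_norm] at hv
        have h2 := (hf01 v).2
        nlinarith [mul_nonneg (sub_nonneg.2 h2)
          (sub_nonneg.2 (pow_le_pow_left₀ (norm_nonneg (v - v₀)) h1.le 2))]
      · rw [indicator_of_notMem hv]
        have h1 : R ≤ ‖v - v₀‖ := not_lt.1 (by rwa [mem_ball, dist_eq_norm] at hv)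
        have h2 := (hf01 v).1
        nlinarith [mul_nonneg h2 (sub_nonneg.2 (pow_le_pow_left₀ hRpos.le h1 2))]
    have hA : Integrable (fun v => f v * ‖v - v₀‖ ^ 2
        - (ball v₀ R).indicator (fun v : EuclideanSpace ℝ (Fin n) => ‖v - v₀‖ ^ 2) v) :=
      hfq.sub hind_q
    have hB : Integrable (fun v => f v
        - (ball v₀ R).indicator (fun _ : EuclideanSpace ℝ (Fin n) => (1:ℝ)) v) :=
      hfint.sub hind_1
    have hpos : 0 ≤ ∫ v, (f v - (ball v₀ R).indicator (fun _ => (1:ℝ)) v)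
        * (‖v - v₀‖ ^ 2 - R ^ 2) := integral_nonneg hnn
    have hexp : (fun v : EuclideanSpace ℝ (Fin n) =>
        (f v - (ball v₀ R).indicator (fun _ => (1:ℝ)) v) * (‖v - v₀‖ ^ 2 - R ^ 2))
        = fun v => (f v * ‖v - v₀‖ ^ 2
            - (ball v₀ R).indicator (fun v : EuclideanSpace ℝ (Fin n) => ‖v - v₀‖ ^ 2) v)
          - R ^ 2 * (f v - (ball v₀ R).indicator (fun _ : EuclideanSpace ℝ (Fin n) => (1:ℝ)) v) := by
      funext v
      by_cases hv : v ∈ ball v₀ R <;>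
        simp only [indicator_of_mem, indicator_of_notMem, hv, if_true, if_false,
          indicator_apply] <;> ring
    rw [hexp, integral_sub hA (hB.const_mul (R^2)), integral_sub hfq hind_q,
      integral_const_mul, integral_sub hfint hind_1, hind_int, ← hM₀, ← hM₂,
      integral_indicator hBmeas, ← hIB] at hpos
    linarith
  -- translate the ball to the origin
  have htrans : IB = ∫ w in ball (0 : EuclideanSpace ℝ (Fin n)) R, ‖w‖ ^ 2 := by
    rw [hIB, ← integral_indicator hBmeas, ← integral_indicator measurableSet_ball,
      ← integral_sub_right_eq_self
        (fun w : EuclideanSpace ℝ (Fin n) =>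
          (ball (0 : EuclideanSpace ℝ (Fin n)) R).indicator (fun w => ‖w‖ ^ 2) w) v₀]
    congr 1
    funext v
    by_cases hv : v ∈ ball v₀ R
    · have hv' : v - v₀ ∈ ball (0 : EuclideanSpace ℝ (Fin n)) R := by
        rw [mem_ball_zero_iff]; rwa [mem_ball, dist_eq_norm] at hv
      rw [indicator_of_mem hv, indicator_of_mem hv']
    · have hv' : v - v₀ ∉ ball (0 : EuclideanSpace ℝ (Fin n)) R := fun hv' =>
        hv (by rw [mem_ball, dist_eq_norm]; exact mem_ball_zero_iff.1 hv')
      rw [indicator_of_notMem hv, indicator_of_notMem hv']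
  -- compute the radial integral
  have hradial : (∫ w in ball (0 : EuclideanSpace ℝ (Fin n)) R, ‖w‖ ^ 2)
      = n * ω * (R ^ (n + 2) / (n + 2)) := by
    have h1 : (∫ w in ball (0 : EuclideanSpace ℝ (Fin n)) R, ‖w‖ ^ 2)
        = ∫ w : EuclideanSpace ℝ (Fin n), (Iio R).indicator (fun y : ℝ => y ^ 2) ‖w‖ := by
      rw [← integral_indicator measurableSet_ball]
      congr 1
      funext w
      by_cases hw : w ∈ ball (0 : EuclideanSpace ℝ (Fin n)) R
      · rw [indicator_of_mem hw,
          indicator_of_mem (show ‖w‖ ∈ Iio R from mem_Iio.2 (mem_ball_zero_iff.1 hw))]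
      · rw [indicator_of_notMem hw, indicator_of_notMem
          (show ‖w‖ ∉ Iio R from fun h => hw (mem_ball_zero_iff.2 (mem_Iio.1 h)))]
    rw [h1, integral_fun_norm_addHaar volume ((Iio R).indicator (fun y : ℝ => y ^ 2))]
    simp only [finrank_euclideanSpace_fin, nsmul_eq_mul, smul_eq_mul, measureReal_def, ← hω]
    have h2 : (∫ y in Ioi (0:ℝ), y ^ (n - 1) * (Iio R).indicator (fun y : ℝ => y ^ 2) y)
        = R ^ (n + 2) / (n + 2) := by
      have h3 : (fun y : ℝ => y ^ (n - 1) * (Iio R).indicator (fun y : ℝ => y ^ 2) y)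
          = (Iio R).indicator (fun y : ℝ => y ^ (n + 1)) := by
        funext y
        by_cases hy : y ∈ Iio R
        · rw [indicator_of_mem hy, indicator_of_mem hy, ← pow_add]
          congr 1
          omega
        · rw [indicator_of_notMem hy, indicator_of_notMem hy, mul_zero]
      rw [h3, setIntegral_indicator measurableSet_Iio, Ioi_inter_Iio,
        ← integral_Ioc_eq_integral_Ioo, ← intervalIntegral.integral_of_le hRpos.le,
        integral_pow, show n + 1 + 1 = n + 2 by omega]
      push_cast
      ring
    rw [h2]
    ring
  -- final algebra
  have hLB : (n:ℝ) * ω * (R ^ (n + 2) / ((n:ℝ) + 2)) ≤ M₂ := by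
    rw [← hradial, ← htrans]; exact hIBle
  have hM0eq : M₀ = ω * R ^ n := by
    rw [hRn]; field_simp
  have hMexp : ((n:ℝ)) * (((n:ℝ) + 2) / (n:ℝ)) = (n:ℝ) + 2 := by
    field_simp
  have hM0e : M₀ ^ (((n:ℝ) + 2) / (n:ℝ)) = ω ^ (((n:ℝ) + 2) / (n:ℝ)) * R ^ ((n:ℝ) + 2) := by
    rw [hM0eq, Real.mul_rpow hωpos.le (pow_nonneg hRpos.le n), ← Real.rpow_natCast R n,
      ← Real.rpow_mul hRpos.le, hMexp]
  have hsa : sphereArea n = n * ω := by rw [sphereArea, hω]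
  have hsph : ((n:ℝ) / sphereArea n) ^ (2 / (n:ℝ)) = ω ^ (-(2 / (n:ℝ))) := by
    rw [hsa, show (n:ℝ) / ((n:ℝ) * ω) = ω⁻¹ by field_simp,
      Real.inv_rpow hωpos.le, ← Real.rpow_neg hωpos.le]
  have hωe : ω ^ (((n:ℝ) + 2) / (n:ℝ)) = ω * ω ^ (2 / (n:ℝ)) := by
    rw [show ((n:ℝ) + 2) / (n:ℝ) = 1 + 2 / (n:ℝ) by field_simp, Real.rpow_add hωpos,
      Real.rpow_one]
  have hR2 : (R:ℝ) ^ (n + 2) = R ^ ((n:ℝ) + 2) := by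
    rw [← Real.rpow_natCast R (n + 2)]
    push_cast
    ring_nf
  have hRpow : (0:ℝ) < R ^ ((n:ℝ) + 2) := Real.rpow_pos_of_pos hRpos _
  have hωrp : (0:ℝ) < ω ^ (2 / (n:ℝ)) := Real.rpow_pos_of_pos hωpos _
  have key : ((n:ℝ) / ((n:ℝ) + 2)) * ω ^ (-(2 / (n:ℝ)))
      = ((n:ℝ) * ω * (R ^ (n + 2) / ((n:ℝ) + 2))) / M₀ ^ (((n:ℝ) + 2) / (n:ℝ)) := by
    rw [hM0e, Real.rpow_neg hωpos.le, hωe, hR2]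
    have ha := hωrp
    have hb := hRpow
    generalize ω ^ (2 / (n:ℝ)) = a at ha ⊢
    generalize R ^ ((n:ℝ) + 2) = b at hb ⊢
    exact key_alg (n:ℝ) a b ω hn0 ha hb hωpos
  rw [ge_iff_le, hsph, key]
  gcongr
end

section
/- Let n ≥ 2 and let f ∈ L¹(ℝⁿ) with 0 ≤ f ≤ 1, finite second moment, and M₀ = ∫ f dv > 0. With v₀ and M₂ as the center of mass and centered second moment, equality M₂ / M₀^{(n+2)/n} = (n/(n+2)) (n/|𝕊^{n-1}|)^{2/n} holds if and only if f(v) = 1_{{|v−v₀| ≤ R}} almost everywhere for some constant 0 < R < ∞. -/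
open MeasureTheory Set Metric

section aux
variable (n : ℕ)

local notation "E" => EuclideanSpace ℝ (Fin n)

noncomputable def ubv : ℝ := (volume (ball (0 : EuclideanSpace ℝ (Fin n)) 1)).toReal

lemma aux_vol (x : E) {r : ℝ} (hr : 0 ≤ r) :
    ∫ v : E, (closedBall x r).indicator (1 : E → ℝ) v = ubv n * r ^ n := by
  rw [ubv, integral_indicator_one measurableSet_closedBall, measureReal_def,
    Measure.addHaar_closedBall volume x hr, finrank_euclideanSpace_fin,
    ENNReal.toReal_mul, ENNReal.toReal_ofReal (by positivity)]
  ring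

lemma aux_mom (hn : 1 ≤ n) (x : E) {r : ℝ} (hr : 0 ≤ r) :
    ∫ v : E, (closedBall x r).indicator (fun v => ‖v - x‖ ^ 2) v
      = n * ubv n * r ^ (n + 2) / (n + 2) := by
  haveI : Nontrivial E := by
    apply Module.nontrivial_of_finrank_pos (R := ℝ)
    rw [finrank_euclideanSpace_fin]; omega
  have h1 : (fun v : E => (closedBall x r).indicator (fun v => ‖v - x‖ ^ 2) v)
      = fun v : E => (closedBall (0 : E) r).indicator (fun u => ‖u‖ ^ 2) (v - x) := by
    funext v
    by_cases h : v ∈ closedBall x r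
    · rw [indicator_of_mem h, indicator_of_mem (by
        rwa [mem_closedBall_zero_iff, ← mem_closedBall_iff_norm])]
    · rw [indicator_of_notMem h, indicator_of_notMem (by
        rwa [mem_closedBall_zero_iff, ← mem_closedBall_iff_norm])]
  rw [h1, integral_sub_right_eq_self (fun u : E => (closedBall (0 : E) r).indicator
    (fun u => ‖u‖ ^ 2) u) x]
  have h2 : (fun u : E => (closedBall (0 : E) r).indicator (fun u => ‖u‖ ^ 2) u)
      = fun u : E => (Icc (0:ℝ) r).indicator (fun y => y ^ 2) ‖u‖ := by
    funext u
    by_cases h : u ∈ closedBall (0 : E) r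
    · rw [indicator_of_mem h, indicator_of_mem
        (mem_Icc.2 ⟨norm_nonneg u, mem_closedBall_zero_iff.1 h⟩)]
    · rw [indicator_of_notMem h, indicator_of_notMem (fun hy =>
        h (mem_closedBall_zero_iff.2 hy.2))]
  rw [h2, integral_fun_norm_addHaar volume ((Icc (0:ℝ) r).indicator (fun y => y ^ 2))]
  have h3 : (fun y : ℝ => y ^ (n - 1) •
        (Icc (0:ℝ) r).indicator (fun y => y ^ 2) y)
      = fun y : ℝ => (Icc (0:ℝ) r).indicator (fun y => y ^ (n + 1)) y := by
    funext y
    by_cases h : y ∈ Icc (0:ℝ) r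
    · rw [smul_eq_mul, indicator_of_mem h, indicator_of_mem h, ← pow_add]
      congr 1
      omega
    · rw [indicator_of_notMem h, indicator_of_notMem h, smul_zero]
  rw [ubv, finrank_euclideanSpace_fin]
  simp only [h3]
  rw [setIntegral_indicator measurableSet_Icc]
  have h4 : Ioi (0:ℝ) ∩ Icc 0 r = Ioc 0 r := by
    ext y
    simp only [mem_inter_iff, mem_Ioi, mem_Icc, mem_Ioc]
    constructor
    · rintro ⟨h1, _, h3⟩; exact ⟨h1, h3⟩
    · rintro ⟨h1, h2⟩; exact ⟨h1, h1.le, h2⟩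
  rw [h4, ← intervalIntegral.integral_of_le hr, integral_pow]
  rw [nsmul_eq_mul, smul_eq_mul]
  have : (0:ℝ) ^ (n + 1 + 1) = 0 := zero_pow (by omega)
  rw [this]
  push_cast
  rw [measureReal_def]
  ring

end aux

lemma aux_arith (n : ℕ) (hn : 2 ≤ n) {w R : ℝ} (hw : 0 < w) (hR : 0 < R) :
    (n * w * R ^ (n + 2) / (n + 2)) / (w * R ^ n) ^ (((n:ℝ) + 2) / n)
      = ((n:ℝ) / (n + 2)) * ((n:ℝ) / (n * w)) ^ (2 / (n:ℝ)) := by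
  have hN : (0:ℝ) < n := by positivity
  have hNe : (n:ℝ) ≠ 0 := hN.ne'
  have e1 : (w * R ^ n : ℝ) ^ (((n:ℝ) + 2) / n) = w ^ (((n:ℝ) + 2) / n) * R ^ (n + 2) := by
    rw [Real.mul_rpow hw.le (by positivity), ← Real.rpow_natCast R n,
      ← Real.rpow_mul hR.le]
    congr 1
    rw [show (n:ℝ) * (((n:ℝ) + 2) / n) = (n:ℝ) + 2 by field_simp ,
      show ((n:ℝ) + 2) = ((n + 2 : ℕ) : ℝ) by push_cast; ring, Real.rpow_natCast]
  have e2 : w ^ (((n:ℝ) + 2) / n) = w * w ^ (2 / (n:ℝ)) := by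
    rw [show ((n:ℝ) + 2) / n = 1 + 2 / n by field_simp, Real.rpow_add hw, Real.rpow_one]
  have e3 : ((n:ℝ) / (n * w)) ^ (2 / (n:ℝ)) = (w ^ (2 / (n:ℝ)))⁻¹ := by
    rw [show (n:ℝ) / (n * w) = w⁻¹ by field_simp, ← Real.inv_rpow hw.le]
  rw [e1, e2, e3]
  have h1 : (0:ℝ) < w ^ (2 / (n:ℝ)) := Real.rpow_pos_of_pos hw _
  have h2 : (0:ℝ) < R ^ (n + 2) := by positivity
  have h3 : (0:ℝ) < (n:ℝ) + 2 := by positivity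
  field_simp

theorem stmt_3 (n : ℕ) (hn : 2 ≤ n)
    (f : EuclideanSpace ℝ (Fin n) → ℝ) (hf : Measurable f)
    (hf01 : ∀ v, 0 ≤ f v ∧ f v ≤ 1)
    (hint : Integrable (fun v => f v * (1 + ‖v‖ ^ 2)))
    (M₀ : ℝ) (hM₀ : M₀ = ∫ v, f v) (hM₀pos : 0 < M₀)
    (v₀ : EuclideanSpace ℝ (Fin n)) (hv₀ : v₀ = M₀⁻¹ • ∫ v, f v • v)
    (M₂ : ℝ) (hM₂ : M₂ = ∫ v, f v * ‖v - v₀‖ ^ 2) :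
    M₂ / M₀ ^ (((n : ℝ) + 2) / n)
        = ((n : ℝ) / (n + 2)) * ((n : ℝ) / sphereArea n) ^ (2 / (n : ℝ))
      ↔ ∃ R : ℝ, 0 < R ∧
          ∀ᵐ v, f v = Set.indicator (closedBall v₀ R) 1 v := by
  classical
  have hn1 : 1 ≤ n := by omega
  have hω : 0 < ubv n :=
    ENNReal.toReal_pos (measure_ball_pos volume _ one_pos).ne' measure_ball_lt_top.ne
  haveI : Nontrivial (EuclideanSpace ℝ (Fin n)) := by
    apply Module.nontrivial_of_finrank_pos (R := ℝ)
    rw [finrank_euclideanSpace_fin]; omega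
  have hsA : sphereArea n = n * ubv n := rfl
  -- integrability facts
  have hfi : Integrable f := by
    refine hint.mono hf.aestronglyMeasurable (ae_of_all _ fun v => ?_)
    have h1 := (hf01 v).1
    have h2 : (0:ℝ) ≤ ‖v‖ ^ 2 := sq_nonneg _
    rw [Real.norm_eq_abs, Real.norm_eq_abs, abs_of_nonneg h1,
      abs_of_nonneg (by positivity)]
    nlinarith
  have hcont2 : Continuous (fun v : EuclideanSpace ℝ (Fin n) => ‖v - v₀‖ ^ 2) :=
    ((continuous_id.sub continuous_const).norm.pow 2)
  have hfm2 : Integrable (fun v => f v * ‖v - v₀‖ ^ 2) := by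
    refine (hint.const_mul (2 + 2 * ‖v₀‖ ^ 2)).mono
      (hf.aestronglyMeasurable.mul hcont2.aestronglyMeasurable) (ae_of_all _ fun v => ?_)
    have h1 := (hf01 v).1
    have hkey : ‖v - v₀‖ ^ 2 ≤ (2 + 2 * ‖v₀‖ ^ 2) * (1 + ‖v‖ ^ 2) := by
      nlinarith [norm_sub_le v v₀, norm_nonneg (v - v₀), norm_nonneg v, norm_nonneg v₀,
        sq_nonneg (‖v‖ - ‖v₀‖), sq_nonneg (‖v‖ * ‖v₀‖)]
    rw [Real.norm_eq_abs, Real.norm_eq_abs, abs_of_nonneg (by positivity),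
      abs_of_nonneg (by positivity)]
    nlinarith [mul_le_mul_of_nonneg_left hkey h1]
  -- the ball radius matching the mass
  set R : ℝ := (M₀ / ubv n) ^ ((1:ℝ)/n) with hRdef
  have hR : 0 < R := Real.rpow_pos_of_pos (div_pos hM₀pos hω) _
  have hRn : ubv n * R ^ n = M₀ := by
    rw [hRdef, ← Real.rpow_natCast ((M₀ / ubv n) ^ ((1:ℝ)/n)) n,
      ← Real.rpow_mul (div_pos hM₀pos hω).le, one_div,
      inv_mul_cancel₀ (show (n:ℝ) ≠ 0 by positivity), Real.rpow_one]
    field_simp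
  set χ : EuclideanSpace ℝ (Fin n) → ℝ := (closedBall v₀ R).indicator 1 with hχ
  have hχval : ∫ v, χ v = M₀ := by rw [hχ, aux_vol n v₀ hR.le, hRn]
  set I : ℝ := n * ubv n * R ^ (n + 2) / (n + 2) with hI
  have hχmul : (fun v => χ v * ‖v - v₀‖ ^ 2)
      = (closedBall v₀ R).indicator (fun v => ‖v - v₀‖ ^ 2) := by
    funext v
    by_cases h : v ∈ closedBall v₀ R <;>
      simp [hχ, indicator_of_mem, indicator_of_notMem, h]
  have hχi : Integrable χ := by
    rw [hχ]
    refine (integrable_indicator_iff measurableSet_closedBall).2 ?_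
    have hlt : volume (closedBall v₀ R) < ⊤ := measure_closedBall_lt_top
    exact (integrableOn_const_iff (C := (1:ℝ)) (s := closedBall v₀ R) (μ := volume)).2 (Or.inr hlt)
  have hχmi : Integrable (fun v => χ v * ‖v - v₀‖ ^ 2) := by
    rw [hχmul]
    exact (integrable_indicator_iff measurableSet_closedBall).2
      (hcont2.continuousOn.integrableOn_compact (isCompact_closedBall _ _))
  have expand : (fun v => (f v - χ v) * (‖v - v₀‖ ^ 2 - R ^ 2))
      = fun v => (f v * ‖v - v₀‖ ^ 2 - χ v * ‖v - v₀‖ ^ 2)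
          - (R ^ 2 * f v - R ^ 2 * χ v) := by
    funext v; ring
  have hinth : Integrable (fun v => (f v - χ v) * (‖v - v₀‖ ^ 2 - R ^ 2)) := by
    rw [expand]
    exact (hfm2.sub hχmi).sub ((hfi.const_mul _).sub (hχi.const_mul _))
  have iAB : Integrable (fun v => f v * ‖v - v₀‖ ^ 2 - χ v * ‖v - v₀‖ ^ 2) :=
    hfm2.sub hχmi
  have iCD : Integrable (fun v => R ^ 2 * f v - R ^ 2 * χ v) :=
    (hfi.const_mul _).sub (hχi.const_mul _)
  have key : ∫ v, (f v - χ v) * (‖v - v₀‖ ^ 2 - R ^ 2) = M₂ - I := by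
    rw [expand, integral_sub iAB iCD,
      integral_sub hfm2 hχmi, integral_sub (hfi.const_mul _) (hχi.const_mul _),
      integral_const_mul, integral_const_mul, hχval, ← hM₀, ← hM₂]
    have : ∫ v, χ v * ‖v - v₀‖ ^ 2 = I := by
      rw [show (∫ v, χ v * ‖v - v₀‖ ^ 2)
          = ∫ v, (closedBall v₀ R).indicator (fun v => ‖v - v₀‖ ^ 2) v from by
        rw [hχmul], aux_mom n hn1 v₀ hR.le, hI]
    rw [this]
    ring
  have hpos : ∀ v, 0 ≤ (f v - χ v) * (‖v - v₀‖ ^ 2 - R ^ 2) := by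
    intro v
    by_cases h : v ∈ closedBall v₀ R
    · have h1 : χ v = 1 := by simp [hχ, indicator_of_mem h]
      have h2 : ‖v - v₀‖ ≤ R := by rwa [mem_closedBall_iff_norm] at h
      have h3 := (hf01 v).2
      have hx : ‖v - v₀‖ ^ 2 ≤ R ^ 2 := pow_le_pow_left₀ (norm_nonneg _) h2 2
      nlinarith [mul_nonneg (sub_nonneg.2 h3) (sub_nonneg.2 hx)]
    · have h1 : χ v = 0 := by simp [hχ, indicator_of_notMem h]
      have h2 : R ≤ ‖v - v₀‖ := by
        rw [mem_closedBall_iff_norm, not_le] at h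
        linarith
      have hx : R ^ 2 ≤ ‖v - v₀‖ ^ 2 := pow_le_pow_left₀ hR.le h2 2
      nlinarith [mul_nonneg (hf01 v).1 (sub_nonneg.2 hx)]
  have harith : I / M₀ ^ (((n:ℝ) + 2) / n)
      = ((n:ℝ) / (n + 2)) * ((n:ℝ) / sphereArea n) ^ (2 / (n:ℝ)) := by
    rw [hsA, hI, ← hRn]
    exact aux_arith n hn hω hR
  have hMp : 0 < M₀ ^ (((n:ℝ) + 2) / n) := Real.rpow_pos_of_pos hM₀pos _
  constructor
  · intro heq
    have hM2I : M₂ = I := by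
      have h := heq.trans harith.symm
      have h2 := (div_eq_div_iff hMp.ne' hMp.ne').1 h
      exact mul_right_cancel₀ hMp.ne' h2
    have hint0 : ∫ v, (f v - χ v) * (‖v - v₀‖ ^ 2 - R ^ 2) = 0 := by
      rw [key, hM2I, sub_self]
    have hae0 : (fun v => (f v - χ v) * (‖v - v₀‖ ^ 2 - R ^ 2)) =ᵐ[volume] 0 :=
      (integral_eq_zero_iff_of_nonneg (fun v => hpos v) hinth).1 hint0
    have hsph : ∀ᵐ v : EuclideanSpace ℝ (Fin n), v ∉ sphere v₀ R :=
      measure_eq_zero_iff_ae_notMem.1 (Measure.addHaar_sphere_of_ne_zero volume v₀ hR.ne')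
    refine ⟨R, hR, ?_⟩
    filter_upwards [hae0, hsph] with v h0 hvs
    have h0' : (f v - χ v) * (‖v - v₀‖ ^ 2 - R ^ 2) = 0 := h0
    rcases mul_eq_zero.1 h0' with h | h
    · have : f v = χ v := by linarith
      rw [this, hχ]
    · exfalso
      apply hvs
      rw [mem_sphere_iff_norm]
      have h1 : ‖v - v₀‖ ^ 2 = R ^ 2 := by linarith
      exact (sq_eq_sq₀ (norm_nonneg _) hR.le).1 h1
  · rintro ⟨R', hR', hae⟩
    have hM0' : M₀ = ubv n * R' ^ n := by
      rw [hM₀, integral_congr_ae (hae.mono fun v h => h), aux_vol n v₀ hR'.le]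
    have hM2' : M₂ = n * ubv n * R' ^ (n + 2) / (n + 2) := by
      rw [hM₂]
      have haem : (fun v => f v * ‖v - v₀‖ ^ 2)
          =ᵐ[volume] (closedBall v₀ R').indicator (fun v => ‖v - v₀‖ ^ 2) := by
        filter_upwards [hae] with v h
        rw [h]
        by_cases hv : v ∈ closedBall v₀ R' <;>
          simp [indicator_of_mem, indicator_of_notMem, hv]
      rw [integral_congr_ae haem, aux_mom n hn1 v₀ hR'.le]
    rw [hM2', hM0', hsA]
    exact aux_arith n hn hω hR'
end

section
/- Let n ≥ 2 and let K ⊂ ℝⁿ be a compact set with nonempty interior, and suppose B_r(0) ⊂ K is a closed ball of maximal radius among all closed balls contained in K. Then for every unit vector 𝐧 ∈ 𝕊^{n-1}, the upper half-sphere {x ∈ ∂B_r(0) : ⟨x, 𝐧⟩ ≥ 0} intersects the boundary ∂K. -/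
open Metric RealInnerProductSpace

set_option maxHeartbeats 2000000 in
theorem stmt_14 (n : ℕ) (hn : 2 ≤ n)
    (K : Set (EuclideanSpace ℝ (Fin n))) (hK : IsCompact K)
    (hKint : (interior K).Nonempty)
    (r : ℝ) (hr : 0 < r)
    (hball : closedBall (0 : EuclideanSpace ℝ (Fin n)) r ⊆ K)
    (hmax : ∀ (c : EuclideanSpace ℝ (Fin n)) (r' : ℝ), closedBall c r' ⊆ K → r' ≤ r) :
    ∀ N ∈ sphere (0 : EuclideanSpace ℝ (Fin n)) 1,
      ({x ∈ sphere (0 : EuclideanSpace ℝ (Fin n)) r | 0 ≤ ⟪x, N⟫} ∩ frontier K).Nonempty := by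
  intro N hN
  by_contra hcon
  rw [Set.not_nonempty_iff_eq_empty] at hcon
  set U : Set (EuclideanSpace ℝ (Fin n)) :=
    {x ∈ sphere (0 : EuclideanSpace ℝ (Fin n)) r | 0 ≤ ⟪x, N⟫} with hUdef
  have hNnorm : ‖N‖ = 1 := by simpa using hN
  -- U ⊆ interior K
  have hUsub : U ⊆ interior K := by
    intro x hx
    have hxK : x ∈ K := hball (sphere_subset_closedBall hx.1)
    have hxnf : x ∉ frontier K := by
      intro hf
      have : x ∈ U ∩ frontier K := ⟨hx, hf⟩
      rw [hcon] at this
      exact this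
    have hfr : frontier K = K \ interior K := hK.isClosed.frontier_eq
    by_contra hxi
    exact hxnf (hfr ▸ ⟨hxK, hxi⟩)
  -- U is compact
  have hUcl : IsClosed U := by
    have : U = sphere (0 : EuclideanSpace ℝ (Fin n)) r ∩ {x | 0 ≤ ⟪x, N⟫} := rfl
    rw [this]
    exact (isClosed_sphere).inter (isClosed_le continuous_const
      (continuous_id.inner continuous_const))
  have hUcomp : IsCompact U :=
    (isCompact_sphere (0 : EuclideanSpace ℝ (Fin n)) r).of_isClosed_subset hUcl
      (fun x hx => hx.1)
  obtain ⟨ε, hε, hthick⟩ := hUcomp.exists_cthickening_subset_open isOpen_interior hUsub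
  -- choose t
  set t : ℝ := min (ε / 2) r with ht
  have htpos : 0 < t := lt_min (by linarith) hr
  have htr : t ≤ r := min_le_right _ _
  have htε : 2 * t ≤ ε := by
    have : t ≤ ε / 2 := min_le_left _ _
    linarith
  set ρ : ℝ := r + t ^ 2 / (4 * r) with hρ
  have hdpos : 0 < t ^ 2 / (4 * r) := by positivity
  have hd4 : 4 * r * (t ^ 2 / (4 * r)) = t ^ 2 := by field_simp
  have hd2 : 4 * (t ^ 2 / (4 * r)) ≤ t := by
    nlinarith [hd4, hr, htpos, htr]
  have hρr : r < ρ := by rw [hρ]; linarith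
  set c : EuclideanSpace ℝ (Fin n) := t • N with hc
  have hcnorm : ‖c‖ = t := by
    rw [hc, norm_smul, hNnorm, mul_one, Real.norm_eq_abs, abs_of_pos htpos]
  -- the enlarged ball is in K
  have hsub : closedBall c ρ ⊆ K := by
    intro y hy
    have hyc : ‖y - c‖ ≤ ρ := by rwa [mem_closedBall, dist_eq_norm] at hy
    have hexp : ‖y - c‖ ^ 2 = ‖y‖ ^ 2 - 2 * ⟪y, c⟫ + ‖c‖ ^ 2 := by
      rw [@norm_sub_sq_real]
    have hinner : ⟪y, c⟫ = t * ⟪y, N⟫ := real_inner_smul_right y N t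
    rcases le_or_gt ⟪y, N⟫ 0 with hyN | hyN
    · -- lower half: y stays in the original ball
      have h1 : ‖y‖ ^ 2 ≤ r ^ 2 := by
        have h2 : ‖y - c‖ ^ 2 ≤ ρ ^ 2 := by
          have := norm_nonneg (y - c)
          nlinarith
        rw [hexp, hinner, hcnorm] at h2
        have hρ2 : ρ ^ 2 - t ^ 2 ≤ r ^ 2 := by
          rw [hρ]
          nlinarith [hd4, hd2, hdpos, hr, htr]
        nlinarith
      have hyr : ‖y‖ ≤ r := by nlinarith [norm_nonneg y]
      exact hball (by simpa [mem_closedBall, dist_eq_norm] using hyr)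
    · rcases le_or_gt ‖y‖ r with hyr | hyr
      · exact hball (by simpa [mem_closedBall, dist_eq_norm] using hyr)
      · -- project to the sphere
        have hy0 : ‖y‖ ≠ 0 := (hr.trans hyr).ne'
        set p : EuclideanSpace ℝ (Fin n) := (r / ‖y‖) • y with hp
        have hpnorm : ‖p‖ = r := by
          rw [hp, norm_smul, Real.norm_eq_abs, abs_of_pos (by positivity : (0:ℝ) < r / ‖y‖)]
          field_simp
        have hpU : p ∈ U := by
          constructor
          · simpa [mem_sphere_iff_norm] using hpnorm
          · show 0 ≤ ⟪p, N⟫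
            rw [hp, real_inner_smul_left]
            positivity
        have hdist : dist y p = ‖y‖ - r := by
          have : y - p = (1 - r / ‖y‖) • y := by
            rw [hp, sub_smul, one_smul]
          rw [dist_eq_norm, this, norm_smul, Real.norm_eq_abs,
            abs_of_nonneg (by rw [sub_nonneg]; exact div_le_one_of_le₀ hyr.le (norm_nonneg y))]
          field_simp
        have hybound : ‖y‖ ≤ ρ + t := by
          have h := norm_sub_norm_le y c
          rw [hcnorm] at h
          linarith
        have hdε : dist y p ≤ ε := by
          rw [hdist]
          have h4 : t ^ 2 / (4 * r) ≤ t := by linarith [hd2, hdpos]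
          have : ρ + t - r ≤ 2 * t := by rw [hρ]; linarith
          linarith
        have : y ∈ cthickening ε U :=
          mem_cthickening_of_dist_le y p ε U hpU hdε
        exact interior_subset (hthick this)
  have := hmax c ρ hsub
  linarith
end

section
/- Let n ≥ 2 and let K ⊂ ℝⁿ be a compact set with at least two elements such that for all x, y ∈ ∂K and all σ ∈ 𝕊^{n-1}, either (x+y)/2 + (|x−y|/2)σ ∈ K or (x+y)/2 − (|x−y|/2)σ ∈ K. Then K is convex with nonempty interior, i.e., K is an n-dimensional convex body. -/
open Metric

open scoped RealInnerProductSpace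

private lemma eq_of_sq_eq_sq'' {a b : ℝ} (ha : 0 ≤ a) (hb : 0 ≤ b) (h : a ^ 2 = b ^ 2) :
    a = b := by nlinarith [sq_nonneg (a - b)]

set_option maxHeartbeats 1000000 in
theorem stmt_15 (n : ℕ) (hn : 2 ≤ n)
    (K : Set (EuclideanSpace ℝ (Fin n))) (hK : IsCompact K) (hK2 : K.Nontrivial)
    (hcond : ∀ x ∈ frontier K, ∀ y ∈ frontier K,
      ∀ σ ∈ sphere (0 : EuclideanSpace ℝ (Fin n)) 1,
        (2 : ℝ)⁻¹ • (x + y) + (‖x - y‖ / 2) • σ ∈ K ∨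
        (2 : ℝ)⁻¹ • (x + y) - (‖x - y‖ / 2) • σ ∈ K) :
    Convex ℝ K ∧ (interior K).Nonempty := by
  classical
  have hKne : K.Nonempty := hK2.nonempty
  have hKcl : IsClosed K := hK.isClosed
  -- frontier of a closed set is contained in it
  have hfrsub : frontier K ⊆ K := by
    rw [hKcl.frontier_eq]; exact Set.diff_subset
  -- existence of a nonzero orthogonal vector (uses n ≥ 2)
  have horth : ∀ ν : EuclideanSpace ℝ (Fin n), ν ≠ 0 →
      ∃ w : EuclideanSpace ℝ (Fin n), w ≠ 0 ∧ ⟪w, ν⟫ = 0 := by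
    intro ν hν
    have hspan : Submodule.span ℝ ({ν} : Set (EuclideanSpace ℝ (Fin n))) ≠ ⊤ := by
      intro h
      have h1 := finrank_span_singleton (K := ℝ) hν
      rw [h, finrank_top, finrank_euclideanSpace, Fintype.card_fin] at h1
      omega
    have hbot : (Submodule.span ℝ ({ν} : Set (EuclideanSpace ℝ (Fin n))))ᗮ ≠ ⊥ := by
      rw [Ne, Submodule.orthogonal_eq_bot_iff]; exact hspan
    obtain ⟨w, hw, hw0⟩ := Submodule.exists_mem_ne_zero_of_ne_bot hbot
    refine ⟨w, hw0, ?_⟩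
    have h2 := (Submodule.mem_orthogonal _ w).mp hw ν (Submodule.mem_span_singleton_self ν)
    rw [real_inner_comm] at h2
    exact h2
  -- MAIN PART : convexity
  have hconv : Convex ℝ K := by
    by_contra hnc
    have hnc' : ¬ (∀ x, x ∈ K → ∀ y, y ∈ K → ∀ α β : ℝ,
        0 ≤ α → 0 ≤ β → α + β = 1 → α • x + β • y ∈ K) := by
      intro h
      exact hnc fun x hx y hy α β hα hβ hαβ => h x hx y hy α β hα hβ hαβ
    push_neg at hnc'
    obtain ⟨a, ha, b, hb, α, β, hα, hβ, hαβ, hzK⟩ := hnc'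
    set z : EuclideanSpace ℝ (Fin n) := α • a + β • b with hzdef
    -- α, β > 0
    have hα0 : 0 < α := by
      rcases hα.lt_or_eq with h | h
      · exact h
      · exfalso
        apply hzK
        have hβ1 : β = 1 := by linarith
        rw [hzdef, ← h, hβ1, zero_smul, one_smul, zero_add]
        exact hb
    have hβ0 : 0 < β := by
      rcases hβ.lt_or_eq with h | h
      · exact h
      · exfalso
        apply hzK
        have hα1 : α = 1 := by linarith
        rw [hzdef, ← h, hα1, zero_smul, one_smul, add_zero]
        exact ha
    -- farthest point Z from z
    obtain ⟨Z, hZK, hZmax'⟩ := hK.exists_isMaxOn hKne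
      (f := fun k => ‖k - z‖) ((continuous_id.sub continuous_const).norm.continuousOn)
    have hZmax : ∀ y ∈ K, ‖y - z‖ ≤ ‖Z - z‖ := fun y hy => hZmax' hy
    have hZz : Z ≠ z := fun h => hzK (h ▸ hZK)
    have hZzsub : Z - z ≠ 0 := sub_ne_zero.mpr hZz
    set D : ℝ := ‖Z - z‖ with hDdef
    have hD0 : 0 < D := norm_pos_iff.mpr hZzsub
    set ν : EuclideanSpace ℝ (Fin n) := (D⁻¹ : ℝ) • (Z - z) with hνdef
    have hν1 : ‖ν‖ = 1 := norm_smul_inv_norm (𝕜 := ℝ) hZzsub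
    have hνne : ν ≠ 0 := fun h => by rw [h, norm_zero] at hν1; norm_num at hν1
    set f : EuclideanSpace ℝ (Fin n) → ℝ := fun x => ⟪x - z, ν⟫ with hfdef
    have hfc : Continuous f := (continuous_id.sub continuous_const).inner continuous_const
    have hDν : D • ν = Z - z := by
      rw [hνdef, smul_smul, mul_inv_cancel₀ hD0.ne', one_smul]
    have hinnerZ : ∀ v : EuclideanSpace ℝ (Fin n), ⟪v, Z - z⟫ = D * ⟪v, ν⟫ := by
      intro v; rw [← hDν, real_inner_smul_right]
    have hfZ : f Z = D := by
      have : f Z = ⟪Z - z, Z - z⟫ * D⁻¹ := by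
        rw [hfdef]
        simp only [hνdef, real_inner_smul_right]
        ring
      rw [this, real_inner_self_eq_norm_mul_norm, ← hDdef]
      field_simp
    -- frontier membership of the farthest point
    have hZfr : Z ∈ frontier K := by
      rw [hKcl.frontier_eq]
      refine ⟨hZK, fun hint => ?_⟩
      obtain ⟨ε, hε0, hball⟩ := Metric.isOpen_iff.mp isOpen_interior Z hint
      have hmem : Z + (ε / 2) • ν ∈ K := by
        apply interior_subset
        apply hball
        rw [mem_ball, dist_eq_norm]
        have : Z + (ε / 2) • ν - Z = (ε / 2) • ν := by abel
        rw [this, norm_smul, hν1, mul_one, Real.norm_eq_abs, abs_of_pos (by linarith)]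
        linarith
      have hnorm : ‖Z + (ε / 2) • ν - z‖ = D + ε / 2 := by
        have h1 : Z + (ε / 2) • ν - z = (D + ε / 2) • ν := by
          rw [add_smul, hDν]; abel
        rw [h1, norm_smul, hν1, mul_one, Real.norm_eq_abs, abs_of_pos (by linarith)]
      have := hZmax _ hmem
      rw [hnorm] at this
      linarith
    by_cases hex : ∃ x ∈ frontier K, f x = 0
    · -- CASE A : a frontier point on the hyperplane through z orthogonal to ν
      obtain ⟨x, hxfr, hfx⟩ := hex
      have hxK : x ∈ K := hfrsub hxfr
      have hxz : x ≠ z := fun h => hzK (h ▸ hxK)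
      have hxzsub : x - z ≠ 0 := sub_ne_zero.mpr hxz
      have hxZ : x ≠ Z := by
        intro h; rw [h, hfZ] at hfx; exact hD0.ne' hfx
      set m : EuclideanSpace ℝ (Fin n) := (2 : ℝ)⁻¹ • (x + Z) with hmdef
      set r : ℝ := ‖x - Z‖ / 2 with hrdef
      have hr0 : 0 < r := by
        rw [hrdef]
        have : 0 < ‖x - Z‖ := norm_pos_iff.mpr (sub_ne_zero.mpr hxZ)
        linarith
      have hperp : ⟪x - z, Z - z⟫ = 0 := by
        rw [hinnerZ]
        have : ⟪x - z, ν⟫ = f x := rfl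
        rw [this, hfx, mul_zero]
      have hperp' : ⟪z - x, z - Z⟫ = 0 := by
        have h1 : z - x = -(x - z) := by abel
        have h2 : z - Z = -(Z - z) := by abel
        rw [h1, h2, inner_neg_neg]
        exact hperp
      -- ‖z - m‖ = r  (Thales)
      have hzm : ‖z - m‖ = r := by
        have e1 : z - m = (2 : ℝ)⁻¹ • ((z - x) + (z - Z)) := by
          rw [hmdef]; module
        have n1 : ‖(z - x) + (z - Z)‖ ^ 2 = ‖z - x‖ ^ 2 + ‖z - Z‖ ^ 2 := by
          rw [norm_add_sq_real, hperp']; ring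
        have n2 : ‖x - Z‖ ^ 2 = ‖z - x‖ ^ 2 + ‖z - Z‖ ^ 2 := by
          have e2 : x - Z = (z - Z) - (z - x) := by abel
          rw [e2, norm_sub_sq_real, real_inner_comm, hperp']; ring
        have n3 : ‖(z - x) + (z - Z)‖ = ‖x - Z‖ :=
          eq_of_sq_eq_sq'' (norm_nonneg _) (norm_nonneg _) (by rw [n1, n2])
        have hhalf : ‖(2 : ℝ)⁻¹‖ = (2 : ℝ)⁻¹ := by norm_num [Real.norm_eq_abs]
        rw [e1, norm_smul, n3, hrdef, hhalf]
        ring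
      have hzmne : z - m ≠ 0 := by
        intro h
        rw [h, norm_zero] at hzm
        exact hr0.ne hzm
      set σ : EuclideanSpace ℝ (Fin n) := ‖z - m‖⁻¹ • (z - m) with hσdef
      have hσ1 : ‖σ‖ = 1 := norm_smul_inv_norm (𝕜 := ℝ) hzmne
      have hσS : σ ∈ sphere (0 : EuclideanSpace ℝ (Fin n)) 1 := by
        rw [mem_sphere_zero_iff_norm]; exact hσ1
      have hrσ : r • σ = z - m := by
        rw [hσdef, hzm, smul_smul, mul_inv_cancel₀ hr0.ne', one_smul]
      have hps : m + r • σ = z := by rw [hrσ]; abel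
      rcases hcond x hxfr Z hZfr σ hσS with hmem | hmem
      · apply hzK
        have : (2 : ℝ)⁻¹ • (x + Z) + (‖x - Z‖ / 2) • σ = z := by
          rw [← hmdef, ← hrdef, hps]
        rwa [this] at hmem
      · -- the reflected point is too far from z
        have hq : (2 : ℝ)⁻¹ • (x + Z) - (‖x - Z‖ / 2) • σ - z = (x - z) + (Z - z) := by
          rw [← hmdef, ← hrdef, hrσ]
          rw [hmdef]; module
        have hqnorm : ‖(2 : ℝ)⁻¹ • (x + Z) - (‖x - Z‖ / 2) • σ - z‖ ^ 2
            = ‖x - z‖ ^ 2 + D ^ 2 := by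
          rw [hq, norm_add_sq_real, hperp, ← hDdef]; ring
        have hle := hZmax _ hmem
        have hxz0 : 0 < ‖x - z‖ := norm_pos_iff.mpr hxzsub
        nlinarith [norm_nonneg ((2 : ℝ)⁻¹ • (x + Z) - (‖x - Z‖ / 2) • σ - z)]
    · -- CASE B : the hyperplane {f = 0} through z misses the frontier entirely
      push_neg at hex
      obtain ⟨w, hw0, hwν⟩ := horth ν hνne
      have hwn0 : (0 : ℝ) < ‖w‖ := norm_pos_iff.mpr hw0
      -- K misses the hyperplane {f = 0}
      have hP : ∀ k ∈ K, f k ≠ 0 := by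
        intro k hkK hfk
        set S : Set ℝ := {s : ℝ | k + s • w ∈ K} with hSdef
        have hSc : IsClosed S := by
          have hcont : Continuous fun s : ℝ => k + s • w :=
            continuous_const.add (continuous_id.smul continuous_const)
          exact hKcl.preimage hcont
        have hSo : IsOpen S := by
          rw [Metric.isOpen_iff]
          intro s₀ hs₀
          have hyK : k + s₀ • w ∈ K := hs₀
          have hfy : f (k + s₀ • w) = 0 := by
            have e : k + s₀ • w - z = (k - z) + s₀ • w := by abel
            rw [hfdef]
            simp only [e, inner_add_left, real_inner_smul_left, hwν]
            have : ⟪k - z, ν⟫ = f k := rfl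
            rw [this, hfk]; ring
          have hyint : k + s₀ • w ∈ interior K := by
            by_contra hni
            have hyfr : k + s₀ • w ∈ frontier K := by
              rw [hKcl.frontier_eq]; exact ⟨hyK, hni⟩
            exact hex _ hyfr hfy
          obtain ⟨ε, hε0, hball⟩ := Metric.isOpen_iff.mp isOpen_interior _ hyint
          refine ⟨ε / ‖w‖, by positivity, ?_⟩
          intro s hs
          rw [mem_ball, Real.dist_eq] at hs
          have hd : dist (k + s • w) (k + s₀ • w) < ε := by
            rw [dist_eq_norm]
            have e : k + s • w - (k + s₀ • w) = (s - s₀) • w := by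
              rw [sub_smul]; abel
            rw [e, norm_smul, Real.norm_eq_abs]
            calc |s - s₀| * ‖w‖ < (ε / ‖w‖) * ‖w‖ := by
                  apply mul_lt_mul_of_pos_right hs hwn0
              _ = ε := by field_simp
          show k + s • w ∈ K
          exact interior_subset (hball (mem_ball.mpr hd))
        have hS0 : (0 : ℝ) ∈ S := by
          have : k + (0 : ℝ) • w = k := by rw [zero_smul, add_zero]
          show k + (0 : ℝ) • w ∈ K
          rw [this]; exact hkK
        have hSuniv : S = Set.univ := by
          rcases isClopen_iff.mp ⟨hSc, hSo⟩ with h | h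
          · exact absurd (h ▸ hS0) (Set.notMem_empty 0)
          · exact h
        obtain ⟨C, hC⟩ := (Metric.isBounded_iff_subset_closedBall k).mp hK.isBounded
        set s₁ : ℝ := (|C| + 1) / ‖w‖ with hs₁def
        have hs₁S : s₁ ∈ S := hSuniv ▸ Set.mem_univ s₁
        have hs₁K : k + s₁ • w ∈ K := hs₁S
        have := hC hs₁K
        rw [mem_closedBall, dist_eq_norm] at this
        have e : k + s₁ • w - k = s₁ • w := by abel
        rw [e, norm_smul, Real.norm_eq_abs] at this
        have hs₁pos : 0 < s₁ := by positivity
        rw [abs_of_pos hs₁pos, hs₁def] at this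
        have h2 : (|C| + 1) / ‖w‖ * ‖w‖ = |C| + 1 := by field_simp
        rw [h2] at this
        have := le_abs_self C
        linarith [abs_nonneg C]
      -- slab structure
      have hfz' : f z = 0 := by
        rw [hfdef]; simp
      have hcomb : α * f a + β * f b = 0 := by
        have h1 : α • z + β • z = z := by rw [← add_smul, hαβ, one_smul]
        have e : α • (a - z) + β • (b - z) = z - z := by
          calc α • (a - z) + β • (b - z)
              = (α • a + β • b) - (α • z + β • z) := by
                rw [smul_sub, smul_sub]; abel
            _ = z - z := by rw [h1, ← hzdef]
        have : ⟪α • (a - z) + β • (b - z), ν⟫ = 0 := by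
          rw [e, sub_self, inner_zero_left]
        rw [inner_add_left, real_inner_smul_left, real_inner_smul_left] at this
        exact this
      -- nonemptiness of the two sides
      have hKp_ne : ∃ k ∈ K, 0 < f k := ⟨Z, hZK, by rw [hfZ]; exact hD0⟩
      have hKm_ne : ∃ k ∈ K, f k < 0 := by
        rcases lt_trichotomy (f a) 0 with h | h | h
        · exact ⟨a, ha, h⟩
        · exact absurd h (hP a ha)
        · refine ⟨b, hb, ?_⟩
          by_contra hfb
          push_neg at hfb
          rcases hfb.lt_or_eq with h' | h'
          · nlinarith
          · exact hP b hb h'.symm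
      set Kp : Set (EuclideanSpace ℝ (Fin n)) := K ∩ {x | 0 ≤ f x} with hKpdef
      set Km : Set (EuclideanSpace ℝ (Fin n)) := K ∩ {x | f x ≤ 0} with hKmdef
      have hKpc : IsCompact Kp := hK.inter_right (isClosed_le continuous_const hfc)
      have hKmc : IsCompact Km := hK.inter_right (isClosed_le hfc continuous_const)
      obtain ⟨kp1, hkp1K, hkp1pos⟩ := hKp_ne
      obtain ⟨km1, hkm1K, hkm1neg⟩ := hKm_ne
      obtain ⟨xp, hxpmem, hxpmin'⟩ := hKpc.exists_isMinOn ⟨kp1, hkp1K, le_of_lt hkp1pos⟩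
        (f := f) (hfc.continuousOn)
      obtain ⟨xm, hxmmem, hxmmax'⟩ := hKmc.exists_isMaxOn ⟨km1, hkm1K, le_of_lt hkm1neg⟩
        (f := f) (hfc.continuousOn)
      have hxpmin : ∀ y ∈ Kp, f xp ≤ f y := fun y hy => hxpmin' hy
      have hxmmax : ∀ y ∈ Km, f y ≤ f xm := fun y hy => hxmmax' hy
      obtain ⟨hxpK, hxp0⟩ := hxpmem
      obtain ⟨hxmK, hxm0⟩ := hxmmem
      set sp : ℝ := f xp with hspdef
      set sm : ℝ := f xm with hsmdef
      have hsp0 : 0 < sp := (hxp0.lt_or_eq.resolve_right (fun h => hP xp hxpK h.symm))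
      have hsm0 : sm < 0 := (hxm0.lt_or_eq.resolve_right (hP xm hxmK))
      have hslab : ∀ k ∈ K, f k ≤ sm ∨ sp ≤ f k := by
        intro k hk
        rcases le_or_gt (f k) 0 with h | h
        · exact Or.inl (hxmmax k ⟨hk, h⟩)
        · exact Or.inr (hxpmin k ⟨hk, le_of_lt h⟩)
      have hsmsp : sm < sp := lt_trans hsm0 hsp0
      -- the slab kills membership of points with intermediate f value
      have hslab' : ∀ p : EuclideanSpace ℝ (Fin n), sm < f p → f p < sp → p ∉ K := by
        intro p h1 h2 hpK
        rcases hslab p hpK with h | h <;> linarith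
      -- frontier membership of xp and xm
      have hxpfr : xp ∈ frontier K := by
        rw [hKcl.frontier_eq]
        refine ⟨hxpK, fun hint => ?_⟩
        obtain ⟨ε, hε0, hball⟩ := Metric.isOpen_iff.mp isOpen_interior xp hint
        set c : ℝ := min (ε / 2) ((sp - sm) / 2) with hcdef
        have hc0 : 0 < c := by
          apply lt_min (by linarith)
          linarith
        have hmem : xp - c • ν ∈ K := by
          apply interior_subset
          apply hball
          rw [mem_ball, dist_eq_norm]
          have e : xp - c • ν - xp = -(c • ν) := by abel
          rw [e, norm_neg, norm_smul, hν1, mul_one, Real.norm_eq_abs, abs_of_pos hc0]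
          calc c ≤ ε / 2 := min_le_left _ _
            _ < ε := by linarith
        have hfval : f (xp - c • ν) = sp - c := by
          have e : xp - c • ν - z = (xp - z) - c • ν := by abel
          have h1 : ⟪xp - z, ν⟫ = sp := rfl
          have h2 : ⟪ν, ν⟫ = 1 := by
            rw [real_inner_self_eq_norm_mul_norm, hν1]; norm_num
          show ⟪xp - c • ν - z, ν⟫ = sp - c
          rw [e, inner_sub_left, real_inner_smul_left, h1, h2]; ring
        have hcle : c ≤ (sp - sm) / 2 := min_le_right _ _
        exact hslab' _ (by rw [hfval]; linarith) (by rw [hfval]; linarith) hmem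
      have hxmfr : xm ∈ frontier K := by
        rw [hKcl.frontier_eq]
        refine ⟨hxmK, fun hint => ?_⟩
        obtain ⟨ε, hε0, hball⟩ := Metric.isOpen_iff.mp isOpen_interior xm hint
        set c : ℝ := min (ε / 2) ((sp - sm) / 2) with hcdef
        have hc0 : 0 < c := by
          apply lt_min (by linarith)
          linarith
        have hmem : xm + c • ν ∈ K := by
          apply interior_subset
          apply hball
          rw [mem_ball, dist_eq_norm]
          have e : xm + c • ν - xm = c • ν := by abel
          rw [e, norm_smul, hν1, mul_one, Real.norm_eq_abs, abs_of_pos hc0]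
          calc c ≤ ε / 2 := min_le_left _ _
            _ < ε := by linarith
        have hfval : f (xm + c • ν) = sm + c := by
          have e : xm + c • ν - z = (xm - z) + c • ν := by abel
          have h1 : ⟪xm - z, ν⟫ = sm := rfl
          have h2 : ⟪ν, ν⟫ = 1 := by
            rw [real_inner_self_eq_norm_mul_norm, hν1]; norm_num
          show ⟪xm + c • ν - z, ν⟫ = sm + c
          rw [e, inner_add_left, real_inner_smul_left, h1, h2]; ring
        have hcle : c ≤ (sp - sm) / 2 := min_le_right _ _
        exact hslab' _ (by rw [hfval]; linarith) (by rw [hfval]; linarith) hmem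
      -- the contradiction via a direction orthogonal to ν
      set σ : EuclideanSpace ℝ (Fin n) := ‖w‖⁻¹ • w with hσdef
      have hσ1 : ‖σ‖ = 1 := norm_smul_inv_norm (𝕜 := ℝ) hw0
      have hσS : σ ∈ sphere (0 : EuclideanSpace ℝ (Fin n)) 1 := by
        rw [mem_sphere_zero_iff_norm]; exact hσ1
      have hσν : ⟪σ, ν⟫ = 0 := by
        rw [hσdef, real_inner_smul_left, hwν, mul_zero]
      have hmid : ⟪(2 : ℝ)⁻¹ • (xp + xm) - z, ν⟫ = (sp + sm) / 2 := by
        have e : (2 : ℝ)⁻¹ • (xp + xm) - z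
            = (2 : ℝ)⁻¹ • (xp - z) + (2 : ℝ)⁻¹ • (xm - z) := by module
        rw [e, inner_add_left, real_inner_smul_left, real_inner_smul_left]
        have h1 : ⟪xp - z, ν⟫ = sp := rfl
        have h2 : ⟪xm - z, ν⟫ = sm := rfl
        rw [h1, h2]; ring
      have hfp : f ((2 : ℝ)⁻¹ • (xp + xm) + (‖xp - xm‖ / 2) • σ) = (sp + sm) / 2 := by
        have e : (2 : ℝ)⁻¹ • (xp + xm) + (‖xp - xm‖ / 2) • σ - z
            = ((2 : ℝ)⁻¹ • (xp + xm) - z) + (‖xp - xm‖ / 2) • σ := by abel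
        rw [hfdef]
        simp only [e, inner_add_left, real_inner_smul_left, hσν, hmid]
        ring
      have hfq : f ((2 : ℝ)⁻¹ • (xp + xm) - (‖xp - xm‖ / 2) • σ) = (sp + sm) / 2 := by
        have e : (2 : ℝ)⁻¹ • (xp + xm) - (‖xp - xm‖ / 2) • σ - z
            = ((2 : ℝ)⁻¹ • (xp + xm) - z) - (‖xp - xm‖ / 2) • σ := by abel
        rw [hfdef]
        simp only [e, inner_sub_left, real_inner_smul_left, hσν, hmid]
        ring
      have hmidlt1 : sm < (sp + sm) / 2 := by linarith
      have hmidlt2 : (sp + sm) / 2 < sp := by linarith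
      rcases hcond xp hxpfr xm hxmfr σ hσS with hmem | hmem
      · exact hslab' _ (by rw [hfp]; exact hmidlt1) (by rw [hfp]; exact hmidlt2) hmem
      · exact hslab' _ (by rw [hfq]; exact hmidlt1) (by rw [hfq]; exact hmidlt2) hmem
  -- INTERIOR PART
  refine ⟨hconv, ?_⟩
  rcases eq_or_ne (affineSpan ℝ K) ⊤ with htop | htop
  · exact (hconv.interior_nonempty_iff_affineSpan_eq_top).mpr htop
  · exfalso
    have hvs : vectorSpan ℝ K ≠ ⊤ := by
      intro h
      exact htop ((AffineSubspace.affineSpan_eq_top_iff_vectorSpan_eq_top_of_nonempty ℝ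
        (EuclideanSpace ℝ (Fin n)) (EuclideanSpace ℝ (Fin n)) hKne).mpr h)
    have hbot : (vectorSpan ℝ K)ᗮ ≠ ⊥ := by
      rw [Ne, Submodule.orthogonal_eq_bot_iff]; exact hvs
    obtain ⟨ν, hνmem, hν0⟩ := Submodule.exists_mem_ne_zero_of_ne_bot hbot
    have hdiffs : ∀ p ∈ K, ∀ q ∈ K, ⟪p - q, ν⟫ = 0 := by
      intro p hp q hq
      have h1 : p -ᵥ q ∈ vectorSpan ℝ K := vsub_mem_vectorSpan ℝ hp hq
      have h2 := (Submodule.mem_orthogonal _ ν).mp hνmem _ h1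
      rwa [vsub_eq_sub] at h2
    obtain ⟨x, hx, y, hy, hxy⟩ := hK2
    -- interior K is empty, so the frontier is all of K
    have hino : interior K = ∅ := by
      by_contra hne
      exact htop ((hconv.interior_nonempty_iff_affineSpan_eq_top).mp
        (Set.nonempty_iff_ne_empty.mpr hne))
    have hfr : ∀ p ∈ K, p ∈ frontier K := by
      intro p hp
      rw [hKcl.frontier_eq, hino]
      exact ⟨hp, fun h => h⟩
    set σ : EuclideanSpace ℝ (Fin n) := ‖ν‖⁻¹ • ν with hσdef
    have hσ1 : ‖σ‖ = 1 := norm_smul_inv_norm (𝕜 := ℝ) hν0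
    have hσS : σ ∈ sphere (0 : EuclideanSpace ℝ (Fin n)) 1 := by
      rw [mem_sphere_zero_iff_norm]; exact hσ1
    have hσν : ⟪σ, ν⟫ = ‖ν‖ := by
      rw [hσdef, real_inner_smul_left, real_inner_self_eq_norm_mul_norm]
      have : ‖ν‖ ≠ 0 := norm_ne_zero_iff.mpr hν0
      field_simp
    have hr0 : 0 < ‖x - y‖ / 2 := by
      have : 0 < ‖x - y‖ := norm_pos_iff.mpr (sub_ne_zero.mpr hxy)
      linarith
    have hν0' : 0 < ‖ν‖ := norm_pos_iff.mpr hν0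
    have hyx : ⟪y - x, ν⟫ = 0 := hdiffs y hy x hx
    rcases hcond x (hfr x hx) y (hfr y hy) σ hσS with hmem | hmem
    · have h1 := hdiffs _ hmem x hx
      have e : (2 : ℝ)⁻¹ • (x + y) + (‖x - y‖ / 2) • σ - x
          = (2 : ℝ)⁻¹ • (y - x) + (‖x - y‖ / 2) • σ := by module
      rw [e, inner_add_left, real_inner_smul_left, real_inner_smul_left, hyx, hσν] at h1
      have : ‖x - y‖ / 2 * ‖ν‖ = 0 := by linarith
      rcases mul_eq_zero.mp this with h | h
      · exact hr0.ne' h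
      · exact hν0'.ne' h
    · have h1 := hdiffs _ hmem x hx
      have e : (2 : ℝ)⁻¹ • (x + y) - (‖x - y‖ / 2) • σ - x
          = (2 : ℝ)⁻¹ • (y - x) - (‖x - y‖ / 2) • σ := by module
      rw [e, inner_sub_left, real_inner_smul_left, real_inner_smul_left, hyx, hσν] at h1
      have : ‖x - y‖ / 2 * ‖ν‖ = 0 := by linarith
      rcases mul_eq_zero.mp this with h | h
      · exact hr0.ne' h
      · exact hν0'.ne' h
end
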